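/- For a binary relation R on a nonempty set X, a non-empty w-stable set exists if and only if there exists a compact topology on X under which R is generalized upper tc-semicontinuous. -/
import Mathlib


def tc {X : Type*} (R : X → X → Prop) : X → X → Prop := Relation.TransGen R

def strictTC {X : Type*} (R : X → X → Prop) (x y : X) : Prop :=
  tc R x y ∧ ¬ tc R y x

def WStable {X : Type*} (R : X → X → Prop) (F : Set X) : Prop :=
  (∀ x ∈ F, ∀ y ∈ F, x ≠ y → ¬ tc R x y) ∧
  (∀ x ∈ F, ∀ y ∉ F, tc R y x → tc R x y)

lemma strictTC_trans {X : Type*} {R : X → X → Prop} {x y z : X}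
    (h1 : strictTC R x y) (h2 : strictTC R y z) : strictTC R x z :=
  ⟨h1.1.trans h2.1, fun h => h2.2 (h.trans h1.1)⟩

lemma strictTC_irrefl {X : Type*} {R : X → X → Prop} (x : X) :
    ¬ strictTC R x x := fun h => h.2 h.1

lemma finset_exists_maximal {X : Type*} (R : X → X → Prop) (s : Finset X)
    (hs : s.Nonempty) : ∃ m ∈ s, ∀ x ∈ s, ¬ strictTC R x m := by
  classical
  induction s using Finset.induction_on with
  | empty => simp at hs
  | @insert a t ha ih =>
    rcases t.eq_empty_or_nonempty with rfl | ht
    · refine ⟨a, by simp, ?_⟩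
      intro x hx
      simp only [Finset.mem_insert, Finset.notMem_empty, or_false] at hx
      subst hx
      exact strictTC_irrefl _
    · obtain ⟨m, hm, hmax⟩ := ih ht
      by_cases ham : strictTC R a m
      · refine ⟨a, Finset.mem_insert_self a t, ?_⟩
        intro x hx hxa
        rcases Finset.mem_insert.mp hx with rfl | hxt
        · exact strictTC_irrefl x hxa
        · exact hmax x hxt (strictTC_trans hxa ham)
      · refine ⟨m, Finset.mem_insert_of_mem hm, ?_⟩
        intro x hx hxm
        rcases Finset.mem_insert.mp hx with rfl | hxt
        · exact ham hxm
        · exact hmax x hxt hxm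

/-- A non-empty `w`-stable set of `R` exists if and only if there is a compact
topology on `X` under which `R` is generalized upper tc-semicontinuous. -/
theorem wStable_nonempty_iff_compact_topology {X : Type*} [Nonempty X]
    (R : X → X → Prop) :
    (∃ F : Set X, F.Nonempty ∧ WStable R F) ↔
      (∃ t : TopologicalSpace X, @CompactSpace X t ∧
        ∀ x : X, @IsOpen X t {y : X | strictTC R x y}) := by
  classical
  constructor
  · rintro ⟨F, ⟨f, hf⟩, hW⟩
    -- excluded point topology at f
    letI T : TopologicalSpace X :=
      { IsOpen := fun U => f ∉ U ∨ U = Set.univ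
        isOpen_univ := Or.inr rfl
        isOpen_inter := by
          rintro U V (hU | rfl) hV
          · exact Or.inl (fun h => hU h.1)
          · rcases hV with hV | rfl
            · exact Or.inl (fun h => hV h.2)
            · exact Or.inr (by simp)
        isOpen_sUnion := by
          intro S hS
          by_cases h : ∃ u ∈ S, u = Set.univ
          · obtain ⟨u, huS, rfl⟩ := h
            exact Or.inr (Set.eq_univ_of_univ_subset (Set.subset_sUnion_of_mem huS))
          · push_neg at h
            refine Or.inl ?_
            rintro ⟨u, huS, hfu⟩
            rcases hS u huS with hfu' | rfl
            · exact hfu' hfu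
            · exact h _ huS rfl }
    refine ⟨T, ?_, ?_⟩
    · -- compactness
      refine ⟨?_⟩
      rw [isCompact_iff_finite_subcover]
      intro ι U hU hcov
      obtain ⟨i, hi⟩ := Set.mem_iUnion.mp (hcov (Set.mem_univ f))
      rcases (hU i : f ∉ U i ∨ U i = Set.univ) with hfi | hUi
      · exact absurd hi hfi
      · exact ⟨{i}, by simp [hUi]⟩
    · -- upper sets open
      intro x
      show f ∉ _ ∨ _ = Set.univ
      refine Or.inl ?_
      intro hfx
      simp only [Set.mem_setOf_eq] at hfx
      by_cases hxF : x ∈ F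
      · by_cases hxf : x = f
        · subst hxf; exact strictTC_irrefl x hfx
        · exact hW.1 x hxF f hf hxf hfx.1
      · exact hfx.2 (hW.2 f hf x hxF hfx.1)
  · rintro ⟨t, hcomp, hopen⟩
    -- find a maximal element
    by_cases h : ∃ m : X, ∀ x : X, ¬ strictTC R x m
    · obtain ⟨m, hm⟩ := h
      refine ⟨{m}, Set.singleton_nonempty m, ?_, ?_⟩
      · rintro x rfl y rfl hxy
        exact absurd rfl hxy
      · rintro x rfl y hy hyx
        by_contra hxy
        exact hm y ⟨hyx, hxy⟩
    · exfalso
      push_neg at h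
      have hcov : (Set.univ : Set X) ⊆ ⋃ x : X, {y : X | strictTC R x y} := by
        intro y _
        obtain ⟨x, hx⟩ := h y
        exact Set.mem_iUnion.mpr ⟨x, hx⟩
      obtain ⟨s, hs⟩ := (@isCompact_univ X t hcomp).elim_finite_subcover
        (fun x => {y : X | strictTC R x y}) hopen hcov
      have hsne : s.Nonempty := by
        by_contra hse
        rw [Finset.not_nonempty_iff_eq_empty] at hse
        subst hse
        obtain ⟨z⟩ := ‹Nonempty X›
        simpa using hs (Set.mem_univ z)
      obtain ⟨m, hmem, hmax⟩ := finset_exists_maximal R s hsne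
      obtain ⟨x, hx⟩ := Set.mem_iUnion₂.mp (hs (Set.mem_univ m))
      exact hmax x hx.1 hx.2
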